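/- arXiv:1903.04221 — 5 statements merged into one kernel-verified Lean document; each statement's English description precedes it below -/
import Mathlib

section
/- Fix b ∈ (0, 1/2) and u0 ∈ (0, 1/2). The function g_L(u) = r0²(u, u0) = u0^{1−2b} + u^{1−2b} − 2·u^{1−b}/u0^{b}, defined for u ∈ (0, u0), is increasing on (0, u*) and decreasing on (u*, u0), where u* = u0 · ((1−2b)/(2(1−b)))^{1/b}. -/
open Set

/-- The squared semimetric `r0²(u1,u2) = (u2−u1)/u2^{2b} + (u1^{−b} − u2^{−b})² u1`. -/
noncomputable def r0sq (b u1 u2 : ℝ) : ℝ :=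
  (u2 - u1) / u2 ^ (2 * b) + (u1 ^ (-b) - u2 ^ (-b)) ^ 2 * u1

/-- For `b ∈ (0,1/2)` and `u0 ∈ (0,1/2)`, the function
`g_L(u) = r0²(u,u0) = u0^{1−2b} + u^{1−2b} − 2 u^{1−b}/u0^b`, defined on `(0,u0)`,
is increasing on `(0,u*)` and decreasing on `(u*,u0)`,
where `u* = u0 ((1−2b)/(2(1−b)))^{1/b}`. -/
theorem gL_mono_antitone (b u0 : ℝ) (hb0 : 0 < b) (hb : b < 1/2)
    (hu0 : 0 < u0) (hu0' : u0 < 1/2) :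
    (∀ u ∈ Ioo (0:ℝ) u0,
        r0sq b u u0 = u0 ^ (1 - 2*b) + u ^ (1 - 2*b) - 2 * u ^ (1 - b) / u0 ^ b) ∧
    StrictMonoOn (fun u : ℝ => u0 ^ (1 - 2*b) + u ^ (1 - 2*b) - 2 * u ^ (1 - b) / u0 ^ b)
      (Ioo (0:ℝ) (u0 * ((1 - 2*b) / (2*(1 - b))) ^ (1/b))) ∧
    StrictAntiOn (fun u : ℝ => u0 ^ (1 - 2*b) + u ^ (1 - 2*b) - 2 * u ^ (1 - b) / u0 ^ b)
      (Ioo (u0 * ((1 - 2*b) / (2*(1 - b))) ^ (1/b)) u0) := by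
  have hb1 : 0 < 1 - 2*b := by linarith
  have hb2 : 0 < 1 - b := by linarith
  set c : ℝ := (1 - 2*b) / (2*(1 - b)) with hc
  have hc0 : 0 < c := by positivity
  have hc1 : c < 1 := by
    rw [hc, div_lt_one (by linarith)]; linarith
  set us : ℝ := u0 * c ^ (1/b) with hus
  have hus0 : 0 < us := by positivity
  have hus1 : us < u0 := by
    have : c ^ (1/b) < 1 := Real.rpow_lt_one hc0.le hc1 (by positivity)
    calc us < u0 * 1 := by rw [hus]; exact (mul_lt_mul_iff_right₀ hu0).2 this
    _ = u0 := mul_one u0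
  -- expansion of u^b at the cutoff: us^b = u0^b * c
  have husb : us ^ b = u0 ^ b * c := by
    rw [hus, Real.mul_rpow hu0.le (by positivity), ← Real.rpow_mul hc0.le,
      one_div, inv_mul_cancel₀ hb0.ne', Real.rpow_one]
  -- derivative
  have hderiv : ∀ x : ℝ, 0 < x → HasDerivAt
      (fun u : ℝ => u0 ^ (1 - 2*b) + u ^ (1 - 2*b) - 2 * u ^ (1 - b) / u0 ^ b)
      ((1 - 2*b) * x ^ (1 - 2*b - 1) - 2 * ((1 - b) * x ^ (1 - b - 1)) / u0 ^ b) x := by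
    intro x hx
    have h1 : HasDerivAt (fun u : ℝ => u ^ (1 - 2*b)) ((1 - 2*b) * x ^ (1 - 2*b - 1)) x :=
      Real.hasDerivAt_rpow_const (Or.inl hx.ne')
    have h2 : HasDerivAt (fun u : ℝ => u ^ (1 - b)) ((1 - b) * x ^ (1 - b - 1)) x :=
      Real.hasDerivAt_rpow_const (Or.inl hx.ne')
    exact (h1.const_add _).sub (((h2.const_mul 2).div_const _))
  -- sign of derivative via t = x^b
  have hsign : ∀ x : ℝ, 0 < x →
      ((1 - 2*b) * x ^ (1 - 2*b - 1) - 2 * ((1 - b) * x ^ (1 - b - 1)) / u0 ^ b)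
        = x ^ (-b) * x ^ (-b) / u0 ^ b *
            ((1 - 2*b) * u0 ^ b - 2 * (1 - b) * x ^ b) := by
    intro x hx
    have en : x ^ (-b) = (x ^ b)⁻¹ := Real.rpow_neg hx.le b
    have e1 : x ^ (1 - 2*b - 1) = (x ^ b)⁻¹ * (x ^ b)⁻¹ := by
      rw [show (1 - 2*b - 1) = -b + -b by ring, Real.rpow_add hx, en]
    have e2 : x ^ (1 - b - 1) = (x ^ b)⁻¹ := by
      rw [show (1 - b - 1) = -b by ring, en]
    rw [e1, e2, en]
    have hxb : (0:ℝ) < x ^ b := Real.rpow_pos_of_pos hx b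
    have hub : (0:ℝ) < u0 ^ b := Real.rpow_pos_of_pos hu0 b
    field_simp
  have hposfactor : ∀ x : ℝ, 0 < x →
      0 < x ^ (-b) * x ^ (-b) / u0 ^ b := by
    intro x hx
    have := Real.rpow_pos_of_pos hx (-b)
    have := Real.rpow_pos_of_pos hx b
    have := Real.rpow_pos_of_pos hu0 b
    positivity
  refine ⟨?_, ?_, ?_⟩
  · -- identity
    intro u hu
    obtain ⟨hu1, hu2⟩ := hu
    have hub : (0:ℝ) < u ^ b := Real.rpow_pos_of_pos hu1 b
    have hu0b : (0:ℝ) < u0 ^ b := Real.rpow_pos_of_pos hu0 b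
    have eu1 : u ^ (1 - 2*b) = u * (u ^ b)⁻¹ * (u ^ b)⁻¹ := by
      rw [show (1 - 2*b) = 1 + -b + -b by ring, Real.rpow_add hu1, Real.rpow_add hu1,
        Real.rpow_one, Real.rpow_neg hu1.le]
    have eu2 : u ^ (1 - b) = u * (u ^ b)⁻¹ := by
      rw [show (1 - b) = 1 + -b by ring, Real.rpow_add hu1, Real.rpow_one,
        Real.rpow_neg hu1.le]
    have ev1 : u0 ^ (1 - 2*b) = u0 * (u0 ^ b)⁻¹ * (u0 ^ b)⁻¹ := by
      rw [show (1 - 2*b) = 1 + -b + -b by ring, Real.rpow_add hu0, Real.rpow_add hu0,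
        Real.rpow_one, Real.rpow_neg hu0.le]
    have ev2 : u0 ^ (2*b) = u0 ^ b * u0 ^ b := by
      rw [← Real.rpow_add hu0]; ring_nf
    have eun : u ^ (-b) = (u ^ b)⁻¹ := Real.rpow_neg hu1.le b
    have evn : u0 ^ (-b) = (u0 ^ b)⁻¹ := Real.rpow_neg hu0.le b
    rw [r0sq, eu1, eu2, ev1, ev2, eun, evn]
    field_simp
    ring
  · -- increasing on (0, us)
    apply strictMonoOn_of_deriv_pos (convex_Ioo _ _)
    · apply ContinuousOn.mono (s := Ioi 0) _ (fun x hx => hx.1)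
      intro x hx
      exact ((hderiv x hx).continuousAt).continuousWithinAt
    · intro x hx
      rw [interior_Ioo] at hx
      obtain ⟨hx1, hx2⟩ := hx
      rw [(hderiv x hx1).deriv, hsign x hx1]
      apply mul_pos (hposfactor x hx1)
      -- need 2(1-b) x^b < (1-2b) u0^b
      have hxb : x ^ b < us ^ b := Real.rpow_lt_rpow hx1.le hx2 hb0
      rw [husb] at hxb
      have hub : (0:ℝ) < u0 ^ b := Real.rpow_pos_of_pos hu0 b
      have key : 2 * (1 - b) * x ^ b < (1 - 2*b) * u0 ^ b := by
        calc 2 * (1 - b) * x ^ b < 2 * (1 - b) * (u0 ^ b * c) := by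
              apply (mul_lt_mul_iff_right₀ (by linarith)).2 hxb
        _ = (1 - 2*b) * u0 ^ b := by rw [hc]; field_simp
      linarith
  · -- decreasing on (us, u0)
    apply strictAntiOn_of_deriv_neg (convex_Ioo _ _)
    · apply ContinuousOn.mono (s := Ioi 0) _ (fun x hx => lt_trans hus0 hx.1)
      intro x hx
      exact ((hderiv x hx).continuousAt).continuousWithinAt
    · intro x hx
      rw [interior_Ioo] at hx
      obtain ⟨hx1, hx2⟩ := hx
      have hx0 : 0 < x := lt_trans hus0 hx1
      rw [(hderiv x hx0).deriv, hsign x hx0]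
      apply mul_neg_of_pos_of_neg (hposfactor x hx0)
      have hxb : us ^ b < x ^ b := Real.rpow_lt_rpow hus0.le hx1 hb0
      rw [husb] at hxb
      have hub : (0:ℝ) < u0 ^ b := Real.rpow_pos_of_pos hu0 b
      have key : (1 - 2*b) * u0 ^ b < 2 * (1 - b) * x ^ b := by
        calc (1 - 2*b) * u0 ^ b = 2 * (1 - b) * (u0 ^ b * c) := by rw [hc]; field_simp
        _ < 2 * (1 - b) * x ^ b := by apply (mul_lt_mul_iff_right₀ (by linarith)).2 hxb
      linarith
end

section
/- Fix b ∈ [0, 1/2). For all 0 ≤ u1 < u2 < u0 ≤ 1/2, one has r0²(u2, u0) ≤ 2 · r0²(u1, u0). -/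
open Set

lemma r0sq_key (b : ℝ) (hb0 : 0 ≤ b) (hb : b < 1/2) {x u0 : ℝ}
    (hx : 0 < x) (hxu : x ≤ u0) :
    (x ^ (-b) - u0 ^ (-b)) ^ 2 * x ≤ (u0 - x) / u0 ^ (2 * b) := by
  have hu0 : 0 < u0 := lt_of_lt_of_le hx hxu
  have hA : 0 < x ^ b := Real.rpow_pos_of_pos hx b
  have hC : 0 < u0 ^ b := Real.rpow_pos_of_pos hu0 b
  have hAC : x ^ b ≤ u0 ^ b := Real.rpow_le_rpow hx.le hxu hb0
  -- x^(1-2b) ≤ u0^(1-2b)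
  have hmono : x ^ (1 - 2*b) ≤ u0 ^ (1 - 2*b) :=
    Real.rpow_le_rpow hx.le hxu (by linarith)
  have hxrw : x ^ (1 - 2*b) = x / (x ^ b * x ^ b) := by
    rw [show (1 - 2*b) = 1 + (-b) + (-b) by ring, Real.rpow_add hx, Real.rpow_add hx,
      Real.rpow_one, Real.rpow_neg hx.le]
    field_simp
  have hurw : u0 ^ (1 - 2*b) = u0 / (u0 ^ b * u0 ^ b) := by
    rw [show (1 - 2*b) = 1 + (-b) + (-b) by ring, Real.rpow_add hu0, Real.rpow_add hu0,
      Real.rpow_one, Real.rpow_neg hu0.le]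
    field_simp
  have hi : x * (u0 ^ b * u0 ^ b) ≤ u0 * (x ^ b * x ^ b) := by
    rw [hxrw, hurw, div_le_div_iff₀ (by positivity) (by positivity)] at hmono
    linarith [hmono]
  rw [le_div_iff₀ (by positivity)]
  rw [Real.rpow_neg hx.le, Real.rpow_neg hu0.le,
    show (2 : ℝ) * b = b + b by ring, Real.rpow_add hu0]
  set A := x ^ b
  set C := u0 ^ b
  have heq : ((A)⁻¹ - (C)⁻¹) ^ 2 * x * (C * C) * (A * A) = x * (C - A) ^ 2 := by
    field_simp
  have hgoal : x * (C - A) ^ 2 ≤ (u0 - x) * (A * A) := by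
    nlinarith [mul_le_mul_of_nonneg_left hAC (by positivity : (0:ℝ) ≤ 2 * x * A)]
  have hAA : 0 < A * A := by positivity
  rw [← mul_le_mul_iff_of_pos_right hAA, heq]
  linarith

/-- For `b ∈ [0,1/2)` and all `0 ≤ u1 < u2 < u0 ≤ 1/2`,
one has `r0²(u2,u0) ≤ 2 r0²(u1,u0)`. -/
theorem r0sq_le_two_mul (b : ℝ) (hb0 : 0 ≤ b) (hb : b < 1/2) :
    ∀ u1 u2 u0 : ℝ, 0 ≤ u1 → u1 < u2 → u2 < u0 → u0 ≤ 1/2 →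
      r0sq b u2 u0 ≤ 2 * r0sq b u1 u0 := by
  intro u1 u2 u0 h1 h12 h20 h0half
  have hu2 : 0 < u2 := lt_of_le_of_lt h1 h12
  have hu0 : 0 < u0 := lt_trans hu2 h20
  have hT : (u0 - u2) / u0 ^ (2*b) ≤ (u0 - u1) / u0 ^ (2*b) := by
    gcongr
  have hG1 : 0 ≤ (u1 ^ (-b) - u0 ^ (-b)) ^ 2 * u1 := mul_nonneg (sq_nonneg _) h1
  have hkey := r0sq_key b hb0 hb hu2 h20.le
  unfold r0sq
  linarith
end

section
/- Fix b ∈ (0, 1/2), u0 ∈ (0, 1/2), and set a = ((1−2b)/(2(1−b)))^{1/b}, u* = u0·a. Then r0²(u*, u0) = u0^{1−2b}·[1 − a + (1 − a^b)²·a^{1−2b}] ≤ 2·u0^{1−2b}. -/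
open Set

/-!
`r0²` is homogeneous of degree `1 − 2b`: `r0²(u t, u) = u^{1−2b} r0²(t, 1)`, and
`r0²(t, 1) = 1 − t + (1 − t^b)² t^{1−2b}`. Since `0 < (1−2b)/(2(1−b)) < 1`, the ratio
`a = ((1−2b)/(2(1−b)))^{1/b}` lies in `(0, 1]`, where each of `1 − a`, `(1 − a^b)²` and
`a^{1−2b}` is at most `1`.
-/

open Real

lemma rpow_neg_mul_rpow_neg_mul_self {t : ℝ} (ht : 0 < t) (b : ℝ) :
    t ^ (-b) * t ^ (-b) * t = t ^ (1 - 2 * b) := by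
  rw [← rpow_add ht, ← rpow_add_one ht.ne']
  ring_nf

lemma r0sq_mul_left {u t : ℝ} (hu : 0 < u) (ht : 0 < t) (b : ℝ) :
    r0sq b (u * t) u = u ^ (1 - 2 * b) * r0sq b t 1 := by
  have hdiv : u / u ^ (2 * b) = u ^ (1 - 2 * b) := by
    rw [rpow_sub hu, rpow_one]
  have hfirst : (u - u * t) / u ^ (2 * b) = u ^ (1 - 2 * b) * (1 - t) := by
    rw [← hdiv]; ring
  unfold r0sq
  rw [mul_rpow hu.le ht.le, one_rpow, one_rpow, div_one, hfirst]
  linear_combination (t ^ (-b) - 1) ^ 2 * t * rpow_neg_mul_rpow_neg_mul_self hu b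

lemma r0sq_one_right {t : ℝ} (ht : 0 < t) (b : ℝ) :
    r0sq b t 1 = 1 - t + (1 - t ^ b) ^ 2 * t ^ (1 - 2 * b) := by
  have hinv : t ^ (-b) * t ^ b = 1 := by
    rw [← rpow_add ht, neg_add_cancel, rpow_zero]
  have hsq := rpow_neg_mul_rpow_neg_mul_self ht b
  unfold r0sq
  rw [one_rpow, one_rpow, div_one]
  linear_combination (1 - t ^ b) ^ 2 * hsq
    + t * (2 * t ^ (-b) - 1 - t ^ (-b) * t ^ b) * hinv

lemma one_sub_add_sq_mul_rpow_le_two {t b : ℝ} (ht0 : 0 ≤ t) (ht1 : t ≤ 1)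
    (hb0 : 0 ≤ b) (hb : b ≤ 1 / 2) :
    1 - t + (1 - t ^ b) ^ 2 * t ^ (1 - 2 * b) ≤ 2 := by
  have htb0 : 0 ≤ t ^ b := rpow_nonneg ht0 b
  have htb1 : t ^ b ≤ 1 := rpow_le_one ht0 ht1 hb0
  have hsq : (1 - t ^ b) ^ 2 ≤ 1 := by nlinarith
  have hpow : t ^ (1 - 2 * b) ≤ 1 := rpow_le_one ht0 ht1 (by linarith)
  have hprod : (1 - t ^ b) ^ 2 * t ^ (1 - 2 * b) ≤ 1 :=
    mul_le_one₀ hsq (rpow_nonneg ht0 _) hpow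
  linarith

lemma div_two_mul_one_sub_mem_Ioo {b : ℝ} (hb : b < 1 / 2) :
    (1 - 2 * b) / (2 * (1 - b)) ∈ Ioo 0 1 := by
  have hden : 0 < 2 * (1 - b) := by linarith
  exact ⟨div_pos (by linarith) hden, (div_lt_one hden).2 (by linarith)⟩

theorem r0sq_at_ustar_general (b u0 : ℝ) (hb0 : 0 < b) (hb : b < 1/2)
    (hu0 : 0 < u0) :
    r0sq b (u0 * ((1 - 2*b) / (2*(1 - b))) ^ (1/b)) u0 =
      u0 ^ (1 - 2*b) * (1 - ((1 - 2*b) / (2*(1 - b))) ^ (1/b)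
        + (1 - (((1 - 2*b) / (2*(1 - b))) ^ (1/b)) ^ b) ^ 2
          * (((1 - 2*b) / (2*(1 - b))) ^ (1/b)) ^ (1 - 2*b)) ∧
    u0 ^ (1 - 2*b) * (1 - ((1 - 2*b) / (2*(1 - b))) ^ (1/b)
        + (1 - (((1 - 2*b) / (2*(1 - b))) ^ (1/b)) ^ b) ^ 2
          * (((1 - 2*b) / (2*(1 - b))) ^ (1/b)) ^ (1 - 2*b)) ≤ 2 * u0 ^ (1 - 2*b) := by
  obtain ⟨hc0, hc1⟩ := div_two_mul_one_sub_mem_Ioo hb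
  set a := ((1 - 2*b) / (2*(1 - b))) ^ (1/b)
  have ha0 : 0 < a := rpow_pos_of_pos hc0 _
  have ha1 : a ≤ 1 := rpow_le_one hc0.le hc1.le (by positivity)
  rw [r0sq_mul_left hu0 ha0, r0sq_one_right ha0]
  exact ⟨rfl, (mul_le_mul_of_nonneg_left (one_sub_add_sq_mul_rpow_le_two ha0.le ha1 hb0.le hb.le)
    (rpow_nonneg hu0.le _)).trans_eq (mul_comm _ _)⟩

/-- For `b ∈ (0,1/2)`, `u0 ∈ (0,1/2)`, `a = ((1−2b)/(2(1−b)))^{1/b}` and `u* = u0 a`,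
one has `r0²(u*,u0) = u0^{1−2b} [1 − a + (1 − a^b)² a^{1−2b}] ≤ 2 u0^{1−2b}`. -/
theorem r0sq_at_ustar (b u0 : ℝ) (hb0 : 0 < b) (hb : b < 1/2)
    (hu0 : 0 < u0) (hu0' : u0 < 1/2) :
    r0sq b (u0 * ((1 - 2*b) / (2*(1 - b))) ^ (1/b)) u0 =
      u0 ^ (1 - 2*b) * (1 - ((1 - 2*b) / (2*(1 - b))) ^ (1/b)
        + (1 - (((1 - 2*b) / (2*(1 - b))) ^ (1/b)) ^ b) ^ 2
          * (((1 - 2*b) / (2*(1 - b))) ^ (1/b)) ^ (1 - 2*b)) ∧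
    u0 ^ (1 - 2*b) * (1 - ((1 - 2*b) / (2*(1 - b))) ^ (1/b)
        + (1 - (((1 - 2*b) / (2*(1 - b))) ^ (1/b)) ^ b) ^ 2
          * (((1 - 2*b) / (2*(1 - b))) ^ (1/b)) ^ (1 - 2*b)) ≤ 2 * u0 ^ (1 - 2*b) :=
  r0sq_at_ustar_general b u0 hb0 hb hu0
end

section
/- Fix b ∈ [0, 1/2). For any 0 ≤ uL ≤ u0 ≤ uU ≤ 1/2, the subadditivity-type inequality r0²(uL, uU) ≤ 2·r0²(uL, u0) + 2·r0²(u0, uU) holds. -/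
open Set

/-- For `b ∈ [0,1/2)` and any `0 ≤ uL ≤ u0 ≤ uU ≤ 1/2`, the subadditivity-type
inequality `r0²(uL,uU) ≤ 2 r0²(uL,u0) + 2 r0²(u0,uU)` holds. -/
theorem r0sq_subadd (b : ℝ) (hb0 : 0 ≤ b) (hb : b < 1/2) :
    ∀ uL u0 uU : ℝ, 0 ≤ uL → uL ≤ u0 → u0 ≤ uU → uU ≤ 1/2 →
      r0sq b uL uU ≤ 2 * r0sq b uL u0 + 2 * r0sq b u0 uU := by
  intro uL u0 uU hL hL0 h0U hU
  unfold r0sq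
  have hu0 : (0:ℝ) ≤ u0 := hL.trans hL0
  have huU : (0:ℝ) ≤ uU := hu0.trans h0U
  set a := uL ^ (-b) with ha
  set m := u0 ^ (-b) with hm
  set c := uU ^ (-b) with hc
  -- A part
  have hsplit : (uU - uL) / uU ^ (2*b) =
      (uU - u0) / uU ^ (2*b) + (u0 - uL) / uU ^ (2*b) := by
    rw [← add_div]; ring_nf
  have hA1 : 0 ≤ (uU - u0) / uU ^ (2*b) :=
    div_nonneg (by linarith) (Real.rpow_nonneg huU _)
  have hA1' : 0 ≤ (u0 - uL) / u0 ^ (2*b) :=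
    div_nonneg (by linarith) (Real.rpow_nonneg hu0 _)
  have hA2 : (u0 - uL) / uU ^ (2*b) ≤ (u0 - uL) / u0 ^ (2*b) := by
    rcases eq_or_lt_of_le hu0 with h0 | h0
    · have : uL = 0 := le_antisymm (by linarith) hL
      rw [← h0, this]
      simp
    · apply div_le_div_of_nonneg_left (by linarith) (Real.rpow_pos_of_pos h0 _)
      exact Real.rpow_le_rpow hu0 h0U (by linarith)
  -- B part
  have hsq : (a - c) ^ 2 ≤ 2 * (a - m) ^ 2 + 2 * (m - c) ^ 2 := by
    nlinarith [sq_nonneg (a - 2*m + c)]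
  have hB1 : (a - c) ^ 2 * uL ≤ (2 * (a - m) ^ 2 + 2 * (m - c) ^ 2) * uL :=
    mul_le_mul_of_nonneg_right hsq hL
  have hB2 : (m - c) ^ 2 * uL ≤ (m - c) ^ 2 * u0 :=
    mul_le_mul_of_nonneg_left hL0 (sq_nonneg _)
  have hBnn1 : 0 ≤ (a - m) ^ 2 * uL := mul_nonneg (sq_nonneg _) hL
  have hBnn2 : 0 ≤ (m - c) ^ 2 * u0 := mul_nonneg (sq_nonneg _) hu0
  nlinarith [hsplit, hA1, hA1', hA2, hB1, hB2, hBnn1, hBnn2]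
end

section
/- Let U_{(1)} ≤ … ≤ U_{(n)} be the order statistics of n points in (0,1) and suppose at most m of the indices i satisfy a 'bad' condition. Then for η ∈ [0,1), the worst-case sum Σ over at most m bad indices of 1/(R_i/(n+1))^η (where R_i is the rank) is bounded by Σ_{i=1}^{⌈m/2⌉} (i/(n+1))^{−η} + Σ_{i=⌊n−m/2⌋}^{n} (1−i/(n+1))^{−η} ≤ 4·m^{1−η}·n^{η}/(1−η) for n large enough and m ≤ n. -/
open Real Finset

private lemma step_ineq (η : ℝ) (hη0 : 0 ≤ η) (hη1 : η < 1) (j : ℕ) (hj : 1 ≤ j) :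
    (1 - η) * (j : ℝ) ^ (-η) ≤ (j : ℝ) ^ (1 - η) - ((j : ℝ) - 1) ^ (1 - η) := by
  have hj1 : (1 : ℝ) ≤ (j : ℝ) := by exact_mod_cast hj
  have hjpos : (0 : ℝ) < (j : ℝ) := by linarith
  have hs : (-1 : ℝ) ≤ -(1 / (j : ℝ)) := by
    have : 1 / (j : ℝ) ≤ 1 := by
      rw [div_le_one hjpos]; exact hj1
    linarith
  have hb := rpow_one_add_le_one_add_mul_self hs
    (by linarith : (0:ℝ) ≤ 1 - η) (by linarith : (1:ℝ) - η ≤ 1)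
  have h1 : (1 : ℝ) + -(1 / (j : ℝ)) = ((j : ℝ) - 1) / (j : ℝ) := by
    field_simp; ring
  rw [h1] at hb
  have hA : (((j : ℝ) - 1) / (j : ℝ)) ^ (1 - η)
      = ((j : ℝ) - 1) ^ (1 - η) / (j : ℝ) ^ (1 - η) :=
    Real.div_rpow (by linarith) hjpos.le _
  rw [hA, div_le_iff₀ (Real.rpow_pos_of_pos hjpos _)] at hb
  have hpow : (j : ℝ) ^ (1 - η) / (j : ℝ) = (j : ℝ) ^ (-η) := by
    have := Real.rpow_sub hjpos (1 - η) 1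
    rw [Real.rpow_one] at this
    rw [← this]; norm_num
  have hexp : (1 + (1 - η) * -(1 / (j:ℝ))) * (j : ℝ) ^ (1 - η)
      = (j : ℝ) ^ (1 - η) - (1 - η) * ((j : ℝ) ^ (1 - η) / (j : ℝ)) := by
    ring
  rw [hexp, hpow] at hb
  linarith

private lemma sum_rpow_neg_le (η : ℝ) (hη0 : 0 ≤ η) (hη1 : η < 1) (K : ℕ) :
    ∑ j ∈ Finset.Icc 1 K, (j : ℝ) ^ (-η) ≤ (K : ℝ) ^ (1 - η) / (1 - η) := by
  have h1η : (0 : ℝ) < 1 - η := by linarith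
  induction K with
  | zero => simp [Real.zero_rpow h1η.ne']
  | succ K ih =>
    rw [Finset.sum_Icc_succ_top (by omega : 1 ≤ K + 1)]
    have hstep := step_ineq η hη0 hη1 (K + 1) (by omega)
    have hc : ((K + 1 : ℕ) : ℝ) - 1 = (K : ℝ) := by push_cast; ring
    rw [hc] at hstep
    have h2 : ((K + 1 : ℕ) : ℝ) ^ (-η)
        ≤ (((K + 1 : ℕ) : ℝ) ^ (1 - η) - (K : ℝ) ^ (1 - η)) / (1 - η) := by
      rw [le_div_iff₀ h1η]; linarith
    have h3 : (((K + 1 : ℕ) : ℝ) ^ (1 - η) - (K : ℝ) ^ (1 - η)) / (1 - η)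
        = ((K + 1 : ℕ) : ℝ) ^ (1 - η) / (1 - η) - (K : ℝ) ^ (1 - η) / (1 - η) := by
      ring
    rw [h3] at h2
    linarith

/-- Deterministic rank bound: for `η ∈ [0,1)` there is `N` such that for all `n ≥ N`
and `1 ≤ m ≤ n`, the worst-case sum of the envelope `min{u,1−u}^{−η}` over at most
`m` extreme ranks satisfies
`∑_{i=1}^{⌈m/2⌉} (i/(n+1))^{−η} + ∑_{i=⌊n−m/2⌋}^{n} (1 − i/(n+1))^{−η}
  ≤ 4 m^{1−η} n^{η} / (1−η)`. -/
theorem rank_envelope_bound (η : ℝ) (hη0 : 0 ≤ η) (hη1 : η < 1) :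
    ∃ N : ℕ, ∀ n ≥ N, ∀ m : ℕ, 1 ≤ m → m ≤ n →
      (∑ i ∈ Finset.Icc 1 ((m + 1) / 2), ((i : ℝ) / ((n : ℝ) + 1)) ^ (-η))
        + (∑ i ∈ Finset.Icc (n - (m + 1) / 2) n, (1 - (i : ℝ) / ((n : ℝ) + 1)) ^ (-η))
      ≤ 4 * (m : ℝ) ^ (1 - η) * (n : ℝ) ^ η / (1 - η) := by
  refine ⟨1, fun n hn m hm hmn => ?_⟩
  set k := (m + 1) / 2 with hkdef
  have hk1 : 1 ≤ k := by omega
  have hkm : k ≤ m := by omega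
  have hkn : k ≤ n := hkm.trans hmn
  have hn1 : (0 : ℝ) < (n : ℝ) + 1 := by positivity
  have h1η : (0 : ℝ) < 1 - η := by linarith
  -- per-term rewrite
  have hterm : ∀ j : ℕ, ((j : ℝ) / ((n : ℝ) + 1)) ^ (-η)
      = ((n : ℝ) + 1) ^ η * (j : ℝ) ^ (-η) := by
    intro j
    rw [Real.div_rpow (Nat.cast_nonneg j) hn1.le, Real.rpow_neg hn1.le, div_eq_mul_inv, inv_inv, mul_comm]
  -- reindex the second sum
  have hreindex : (∑ i ∈ Finset.Icc (n - k) n, (1 - (i : ℝ) / ((n : ℝ) + 1)) ^ (-η))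
      = ∑ j ∈ Finset.Icc 1 (k + 1), ((j : ℝ) / ((n : ℝ) + 1)) ^ (-η) := by
    refine Finset.sum_nbij' (fun i => n + 1 - i) (fun j => n + 1 - j) ?_ ?_ ?_ ?_ ?_
    · intro i hi; simp only [Finset.mem_Icc] at hi ⊢; omega
    · intro j hj; simp only [Finset.mem_Icc] at hj ⊢; omega
    · intro i hi; simp only [Finset.mem_Icc] at hi; omega
    · intro j hj; simp only [Finset.mem_Icc] at hj; omega
    · intro i hi; simp only [Finset.mem_Icc] at hi
      have hcast : ((n + 1 - i : ℕ) : ℝ) = (n : ℝ) + 1 - (i : ℝ) := by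
        rw [Nat.cast_sub (by omega : i ≤ n + 1)]; push_cast; ring
      rw [hcast]
      have : ((n : ℝ) + 1 - (i : ℝ)) / ((n : ℝ) + 1) = 1 - (i : ℝ) / ((n : ℝ) + 1) := by
        field_simp
      rw [this]
  rw [hreindex]
  simp_rw [hterm, ← Finset.mul_sum]
  set A := ∑ j ∈ Finset.Icc 1 k, (j : ℝ) ^ (-η) with hA
  set B := ∑ j ∈ Finset.Icc 1 (k + 1), (j : ℝ) ^ (-η) with hB
  have hAB : A ≤ B := by
    apply Finset.sum_le_sum_of_subset_of_nonneg
      (Finset.Icc_subset_Icc_right (by omega))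
    intro i _ _
    exact Real.rpow_nonneg (Nat.cast_nonneg i) _
  have hBle : B ≤ ((k : ℝ) + 1) ^ (1 - η) / (1 - η) := by
    have := sum_rpow_neg_le η hη0 hη1 (k + 1)
    push_cast at this
    exact this
  have hBnn : 0 ≤ B := Finset.sum_nonneg fun i _ => Real.rpow_nonneg (Nat.cast_nonneg i) _
  have hnp : ((n : ℝ) + 1) ^ η ≤ 2 ^ η * (n : ℝ) ^ η := by
    rw [← Real.mul_rpow (by norm_num) (Nat.cast_nonneg n)]
    apply Real.rpow_le_rpow (by positivity) ?_ hη0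
    have : (1 : ℝ) ≤ (n : ℝ) := by exact_mod_cast hn
    linarith
  have hkp : ((k : ℝ) + 1) ^ (1 - η) ≤ 2 ^ (1 - η) * (m : ℝ) ^ (1 - η) := by
    rw [← Real.mul_rpow (by norm_num) (Nat.cast_nonneg m)]
    apply Real.rpow_le_rpow (by positivity) ?_ h1η.le
    have h : k + 1 ≤ 2 * m := by omega
    exact_mod_cast h
  have hnpnn : (0 : ℝ) ≤ ((n : ℝ) + 1) ^ η := Real.rpow_nonneg hn1.le _
  have h2pow : (2 : ℝ) ^ η * 2 ^ (1 - η) = 2 := by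
    rw [← Real.rpow_add (by norm_num : (0:ℝ) < 2)]
    norm_num
  calc ((n : ℝ) + 1) ^ η * A + ((n : ℝ) + 1) ^ η * B
      ≤ 2 * (((n : ℝ) + 1) ^ η * B) := by nlinarith
    _ ≤ 2 * ((2 ^ η * (n : ℝ) ^ η) * (((2 : ℝ) ^ (1 - η) * (m : ℝ) ^ (1 - η)) / (1 - η))) := by
        have hBle2 : B ≤ ((2 : ℝ) ^ (1 - η) * (m : ℝ) ^ (1 - η)) / (1 - η) :=
          hBle.trans (by gcongr)
        have := mul_le_mul hnp hBle2 hBnn (by positivity)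
        linarith
    _ = (2 * ((2 : ℝ) ^ η * 2 ^ (1 - η))) * (m : ℝ) ^ (1 - η) * (n : ℝ) ^ η / (1 - η) := by
        ring
    _ = 4 * (m : ℝ) ^ (1 - η) * (n : ℝ) ^ η / (1 - η) := by
        rw [h2pow]; norm_num
end
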